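/- For any positive integer r, the Bell number B_r satisfies B_r = ∑_{λ ⊢ r} c(λ,1)^r / ∏_{l=1}^{r} (l^{c(λ,l)} · c(λ,l)!), where the sum is over integer partitions λ of r and c(λ,l) is the number of parts of λ equal to l. -/

import Mathlib

/-!
Let `Perm α`, `|α| = r`, act on `α → α` by post-composition. Two maps lie in the same orbit iff
they have the same kernel, and every setoid on `α` is a kernel, so there are `B_r` orbits; `σ`
fixes exactly the maps into its fixed-point set, `fix(σ)^r` of them. Burnside's lemma thus gives
`∑_σ fix(σ)^r = B_r · r!`. On the other side, the permutations of cycle type `λ` form a class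
of `r!/z_λ` elements (`z_λ` the order of a centralizer), each with `c(λ,1)` fixed points, so the
same sum equals `r! · ∑_λ c(λ,1)^r / z_λ`.
-/

open Finset

/-- The `k`-th Bell number: the number of set partitions of a `k`-element set,
via the standard recurrence B₀ = 1, B_{n+1} = ∑_{k ≤ n} C(n,k) B_k. -/
def bellNumber : ℕ → ℕ
  | 0 => 1
  | n + 1 => ∑ k ∈ (Finset.range (n + 1)).attach, n.choose k.1 * bellNumber k.1
decreasing_by exact Finset.mem_range.mp k.2

open scoped Nat
open MulAction

theorem bellNumber_succ (n : ℕ) :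
    bellNumber (n + 1) = ∑ k ∈ range (n + 1), n.choose k * bellNumber k := by
  rw [bellNumber]
  exact sum_attach (range (n + 1)) fun k => n.choose k * bellNumber k

theorem bellNumber_eq_bell (n : ℕ) : bellNumber n = n.bell := by
  induction n using Nat.strong_induction_on with
  | _ n ih =>
    cases n with
    | zero => rw [bellNumber, Nat.bell_zero]
    | succ n =>
      rw [bellNumber_succ, Nat.bell_succ, ← Nat.range_succ_eq_Iic, ← sum_range_reflect]
      refine sum_congr rfl fun k hk => ?_
      have hk : k ≤ n := Nat.lt_succ_iff.1 (mem_range.1 hk)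
      rw [add_tsub_cancel_right, ih (n - k) (by omega), Nat.choose_symm hk]

namespace Setoid

variable {α : Type*}

instance [Finite α] : Finite (Setoid α) :=
  Finite.of_injective (fun s : Setoid α => s.r) fun _ _ h =>
    Setoid.ext fun x y => iff_of_eq (congrFun (congrFun h x) y)

theorem ker_comp_of_injective {β γ : Type*} {f : β → γ} (hf : f.Injective) (g : α → β) :
    ker (f ∘ g) = ker g :=
  Setoid.ext fun _ _ => hf.eq_iff

def extendCompl (A : Set α) (t : Setoid {x // x ∉ A}) : Setoid α where
  r x y := (x ∈ A ∧ y ∈ A) ∨ ∃ (hx : x ∉ A) (hy : y ∉ A), t ⟨x, hx⟩ ⟨y, hy⟩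
  iseqv := by
    constructor
    · intro x
      by_cases hx : x ∈ A
      · exact .inl ⟨hx, hx⟩
      · exact .inr ⟨hx, hx, t.refl _⟩
    · rintro x y (⟨hx, hy⟩ | ⟨hx, hy, h⟩)
      · exact .inl ⟨hy, hx⟩
      · exact .inr ⟨hy, hx, t.symm h⟩
    · rintro x y z (⟨hx, hy⟩ | ⟨hx, hy, h⟩) (⟨hy', hz⟩ | ⟨hy', hz, h'⟩)
      · exact .inl ⟨hx, hz⟩
      · exact absurd hy hy'
      · exact absurd hy' hy
      · exact .inr ⟨hx, hz, t.trans h h'⟩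

def classEqEquiv {a : α} {A : Set α} (ha : a ∈ A) :
    {s : Setoid α // ∀ x, s a x ↔ x ∈ A} ≃ Setoid {x // x ∉ A} where
  toFun s := comap Subtype.val s.1
  invFun t := ⟨extendCompl A t, fun x =>
    ⟨by rintro (⟨-, hx⟩ | ⟨ha', -⟩); exacts [hx, (ha' ha).elim], fun hx => .inl ⟨ha, hx⟩⟩⟩
  left_inv := by
    rintro ⟨s, hs⟩
    refine Subtype.ext <| Setoid.ext fun x y => ⟨?_, fun h => ?_⟩
    · rintro (⟨hx, hy⟩ | ⟨_, _, h⟩)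
      · exact s.trans (s.symm ((hs x).2 hx)) ((hs y).2 hy)
      · exact h
    · by_cases hx : x ∈ A
      · exact .inl ⟨hx, (hs y).1 (s.trans ((hs x).2 hx) h)⟩
      · exact .inr ⟨hx, fun hy => hx ((hs x).1 (s.trans ((hs y).2 hy) (s.symm h))), h⟩
  right_inv t := Setoid.ext fun ⟨x, hx⟩ ⟨y, hy⟩ =>
    ⟨fun h => h.elim (fun h' => (hx h'.1).elim) fun ⟨_, _, h'⟩ => h', fun h => .inr ⟨hx, hy, h⟩⟩

theorem natCard_eq_bell (α : Type*) [Finite α] : Nat.card (Setoid α) = (Nat.card α).bell := by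
  induction h : Nat.card α using Nat.strong_induction_on generalizing α with
  | _ n ih =>
    classical
    have := Fintype.ofFinite α
    have := Fintype.ofFinite (Setoid α)
    cases n with
    | zero =>
      have : IsEmpty α := Finite.card_eq_zero_iff.1 h
      have : Subsingleton (Setoid α) := ⟨fun s t => Setoid.ext fun x => isEmptyElim x⟩
      rw [Nat.card_unique, Nat.bell_zero]
    | succ n =>
      -- classify the setoids by the class of a point `a`, with `a` removed
      obtain ⟨a⟩ : Nonempty α := Nat.card_pos_iff.1 (by omega) |>.1
      have hα : Fintype.card α = n + 1 := Nat.card_eq_fintype_card (α := α) ▸ h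
      have hcard : #(univ.erase a) = n := by
        rw [card_erase_of_mem (mem_univ a), card_univ, hα, add_tsub_cancel_right]
      let cls : Setoid α → Finset α := fun s => {x ∈ univ.erase a | s a x}
      have hfiber (B : Finset α) (hB : B ∈ (univ.erase a).powerset) :
          #{s | cls s = B} = (n - #B).bell := by
        have haB : a ∉ B := fun haB => by simpa using mem_powerset.1 hB haB
        have hcls (s : Setoid α) : cls s = B ↔ ∀ x, s a x ↔ x ∈ (↑(insert a B) : Set α) := by
          simp only [cls, Finset.ext_iff, mem_filter, mem_erase, mem_univ, and_true, coe_insert,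
            Set.mem_insert_iff, mem_coe]
          refine ⟨fun hB x => ?_, fun hs x => ?_⟩
          · by_cases hx : x = a
            · exact iff_of_true (hx ▸ s.refl a) (.inl hx)
            · rw [← hB x]; tauto
          · by_cases hx : x = a
            · exact iff_of_false (fun h => h.1 hx) (hx ▸ haB)
            · rw [hs x]; tauto
        have hcompl : Nat.card {x // x ∉ (↑(insert a B) : Set α)} = n - #B := by
          simp only [mem_coe, Nat.card_eq_fintype_card, Fintype.card_subtype_compl,
            Fintype.card_coe, card_insert_of_notMem haB, hα]
          omega
        rw [← Fintype.card_subtype, ← Nat.card_eq_fintype_card,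
          Nat.card_congr ((Equiv.subtypeEquivRight hcls).trans (classEqEquiv (by simp))),
          ih _ (by omega) _ hcompl]
      rw [Nat.card_eq_fintype_card, ← card_univ, card_eq_sum_card_fiberwise (f := cls)
        (t := (univ.erase a).powerset) fun s _ => mem_powerset.2 (filter_subset _ _),
        sum_congr rfl hfiber, sum_powerset_apply_card fun m => (n - m).bell, hcard, Nat.bell_succ,
        Nat.range_succ_eq_Iic]
      rfl

end Setoid

namespace Equiv.Perm

variable {α β : Type*}

theorem exists_comp_eq_of_ker_eq [Finite β] {f g : α → β} (h : Setoid.ker f = Setoid.ker g) :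
    ∃ σ : Perm β, ⇑σ ∘ g = f := by
  classical
  let e : Set.range g ≃ Set.range f := (Setoid.quotientKerEquivRange g).symm.trans <|
    (Quotient.congrRight fun x y => by rw [h]).trans (Setoid.quotientKerEquivRange f)
  refine ⟨e.extendSubtype, funext fun x => ?_⟩
  have hx : (Setoid.quotientKerEquivRange g).symm ⟨g x, Set.mem_range_self x⟩ = ⟦x⟧ :=
    Equiv.symm_apply_eq _ |>.2 rfl
  rw [Function.comp_apply, e.extendSubtype_apply_of_mem _ (Set.mem_range_self x)]
  simp only [e, Equiv.trans_apply, hx]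
  rfl

noncomputable def orbitRelQuotientEquivSetoid [Finite α] :
    orbitRel.Quotient (Perm α) (α → α) ≃ Setoid α :=
  Equiv.ofBijective (Quotient.lift Setoid.ker <| by
      rintro _ g ⟨σ, rfl⟩
      exact Setoid.ker_comp_of_injective σ.injective g) <| by
    refine ⟨fun f g hfg => ?_, fun s => ?_⟩
    · induction f using Quotient.inductionOn
      induction g using Quotient.inductionOn
      obtain ⟨σ, hσ⟩ := exists_comp_eq_of_ker_eq hfg
      exact Quotient.sound ⟨σ, hσ⟩
    · exact ⟨Quotient.mk _ fun x => (Quotient.mk s x).out,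
        Setoid.ext fun x y => Quotient.out_inj.trans Quotient.eq⟩

theorem natCard_fixedBy_pi [Finite α] (σ : Perm β) :
    Nat.card (fixedBy (α → β) σ) = Nat.card (Function.fixedPoints σ) ^ Nat.card α := by
  rw [← Nat.card_fun]
  exact Nat.card_congr
    { toFun f i := ⟨f.1 i, congrFun f.2 i⟩
      invFun g := ⟨fun i => (g i).1, funext fun i => (g i).2⟩ }

theorem sum_natCard_fixedPoints_pow_card (α : Type*) [Fintype α] [DecidableEq α] :
    ∑ σ : Perm α, Nat.card (Function.fixedPoints σ) ^ Fintype.card α =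
      (Fintype.card α).bell * (Fintype.card α)! := by
  have : ∀ σ : Perm α, Fintype (fixedBy (α → α) σ) := fun _ => Fintype.ofFinite _
  have : Fintype (orbitRel.Quotient (Perm α) (α → α)) := Fintype.ofFinite _
  have burnside := sum_card_fixedBy_eq_card_orbits_mul_card_group (Perm α) (α → α)
  simp only [Fintype.card_eq_nat_card, natCard_fixedBy_pi] at burnside
  rw [← Nat.card_eq_fintype_card, burnside, Nat.card_congr orbitRelQuotientEquivSetoid,
    Setoid.natCard_eq_bell, Nat.card_perm]

end Equiv.Perm

namespace Nat.Partition

variable {n : ℕ}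

theorem filter_two_le_add_replicate_count_one (p : n.Partition) :
    p.parts.filter (2 ≤ ·) + Multiset.replicate (p.parts.count 1) 1 = p.parts := by
  have : p.parts.filter (¬ 2 ≤ ·) = Multiset.replicate (p.parts.count 1) 1 := by
    rw [← Multiset.filter_eq']
    exact Multiset.filter_congr fun x hx => by have := p.parts_pos hx; omega
  rw [← this, Multiset.filter_add_not]

theorem sum_filter_two_le_add_count_one (p : n.Partition) :
    (p.parts.filter (2 ≤ ·)).sum + p.parts.count 1 = n := by
  conv_rhs => rw [← p.parts_sum, ← p.filter_two_le_add_replicate_count_one]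
  simp

/-- The order of the centralizer of a permutation of cycle type `p`. -/
def centralizerCard (p : n.Partition) : ℕ :=
  ∏ l ∈ Icc 1 n, l ^ p.parts.count l * (p.parts.count l)!

theorem centralizerCard_eq (p : n.Partition) :
    p.centralizerCard = (p.parts.count 1)! * (p.parts.filter (2 ≤ ·)).prod *
      ∏ l ∈ (p.parts.filter (2 ≤ ·)).toFinset, ((p.parts.filter (2 ≤ ·)).count l)! := by
  set m := p.parts.filter (2 ≤ ·) with hm
  have hsplit : ∀ l ∈ Icc 1 n, l ^ p.parts.count l * (p.parts.count l)! =
      (if l = 1 then (p.parts.count 1)! else 1) * (l ^ m.count l * (m.count l)!) := by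
    intro l hl
    rcases eq_or_ne l 1 with rfl | hl1
    · simp [hm]
    · rw [if_neg hl1, one_mul, hm, Multiset.count_filter_of_pos (by grind)]
  have hone : (if 1 ∈ Icc 1 n then (p.parts.count 1)! else 1) = (p.parts.count 1)! := by
    split_ifs with h
    · rfl
    · have := p.sum_filter_two_le_add_count_one
      rw [show p.parts.count 1 = 0 by simp at h; omega, factorial_zero]
  have hsub : m.toFinset ⊆ Icc 1 n := fun l hl => by
    have hl := Multiset.mem_of_mem_filter (Multiset.mem_toFinset.1 hl)
    exact mem_Icc.2 ⟨p.parts_pos hl, p.parts_sum ▸ Multiset.le_sum_of_mem hl⟩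
  rw [centralizerCard, prod_congr rfl hsplit, prod_mul_distrib, prod_ite_eq', hone, mul_assoc,
    ← prod_subset hsub, prod_mul_distrib, ← Finset.prod_multiset_count]
  exact fun l _ hl => by rw [Multiset.count_eq_zero_of_notMem (by simpa using hl)]; rfl

end Nat.Partition

namespace Equiv.Perm

variable {α : Type*} [Fintype α] [DecidableEq α]

theorem partition_eq_iff_cycleType_eq {σ : Perm α} {p : (Fintype.card α).Partition} :
    σ.partition = p ↔ σ.cycleType = p.parts.filter (2 ≤ ·) := by
  refine ⟨fun h => h ▸ filter_parts_partition_eq_cycleType.symm, fun h => Nat.Partition.ext ?_⟩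
  have := p.sum_filter_two_le_add_count_one
  rw [parts_partition, ← p.filter_two_le_add_replicate_count_one, h, ← sum_cycleType, h]
  congr 2
  omega

theorem natCard_fixedPoints_eq_count_one (σ : Perm α) :
    Nat.card (Function.fixedPoints σ) = σ.partition.parts.count 1 := by
  rw [Nat.card_eq_fintype_card, card_fixedPoints, parts_partition, Multiset.count_add,
    Multiset.count_replicate_self, Multiset.count_eq_zero_of_notMem
      fun h => (one_lt_of_mem_cycleType h).ne rfl, sum_cycleType, zero_add]

theorem card_partition_eq_mul_centralizerCard (p : (Fintype.card α).Partition) :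
    #{σ : Perm α | σ.partition = p} * p.centralizerCard = (Fintype.card α)! := by
  have hsum := p.sum_filter_two_le_add_count_one
  have hcount : p.parts.count 1 = Fintype.card α - (p.parts.filter (2 ≤ ·)).sum := by omega
  simp_rw [partition_eq_iff_cycleType_eq]
  rw [p.centralizerCard_eq, hcount, card_of_cycleType_mul_eq, if_pos ⟨by omega, by simp⟩]

theorem sum_count_one_pow_div_centralizerCard (k : ℕ) :
    ∑ p : (Fintype.card α).Partition, (p.parts.count 1 : ℚ) ^ k / p.centralizerCard =
      (∑ σ : Perm α, (Nat.card (Function.fixedPoints σ) : ℚ) ^ k) / (Fintype.card α)! := by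
  rw [← sum_fiberwise univ partition, sum_div]
  refine sum_congr rfl fun p _ => ?_
  have hcard := card_partition_eq_mul_centralizerCard p
  have hne : #{σ : Perm α | σ.partition = p} * p.centralizerCard ≠ 0 :=
    hcard ▸ Nat.factorial_ne_zero _
  have hfib := left_ne_zero_of_mul hne
  have hz := right_ne_zero_of_mul hne
  rw [sum_congr rfl fun σ hσ => by rw [natCard_fixedPoints_eq_count_one, (mem_filter.1 hσ).2],
    sum_const, nsmul_eq_mul, ← hcard]
  push_cast
  field_simp

end Equiv.Perm

theorem stmt_8_general (r : ℕ) :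
    (bellNumber r : ℚ) =
      ∑ lam : Nat.Partition r,
        ((lam.parts.count 1 : ℚ)) ^ r /
          ∏ l ∈ Finset.Icc 1 r,
            ((l : ℚ) ^ (lam.parts.count l) * (Nat.factorial (lam.parts.count l) : ℚ)) := by
  have hfix := Equiv.Perm.sum_natCard_fixedPoints_pow_card (Fin r)
  have hpart := Equiv.Perm.sum_count_one_pow_div_centralizerCard (α := Fin r) r
  rw [Fintype.card_fin] at hfix hpart
  calc (bellNumber r : ℚ)
      = (∑ σ : Equiv.Perm (Fin r), (Nat.card (Function.fixedPoints σ) : ℚ) ^ r) / r ! := by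
        rw [eq_div_iff (by positivity), bellNumber_eq_bell]
        exact_mod_cast hfix.symm
    _ = _ := by
        rw [← hpart]
        push_cast [Nat.Partition.centralizerCard]
        rfl

/-- For r ≥ 1, B_r = ∑_{λ ⊢ r} c(λ,1)^r / ∏_{l=1}^r (l^{c(λ,l)} · c(λ,l)!),
where the sum is over integer partitions λ of r and c(λ,l) is the number of parts of λ
equal to l. -/
theorem stmt_8 (r : ℕ) (hr : 0 < r) :
    (bellNumber r : ℚ) =
      ∑ lam : Nat.Partition r,
        ((lam.parts.count 1 : ℚ)) ^ r /
          ∏ l ∈ Finset.Icc 1 r,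
            ((l : ℚ) ^ (lam.parts.count l) * (Nat.factorial (lam.parts.count l) : ℚ)) :=
  stmt_8_general r
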